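/- Let supp(u_1) and supp(u_2) be minimal sections in 𝒮(v_1) and 𝒮(v_2) respectively (v_1, v_2 not necessarily distinct). If supp(u_1) ≠ supp(u_2), then supp(u_1) ∩ supp(u_2) = ∅; that is, two minimal sections are either equal or disjoint. -/

import Mathlib

open scoped BigOperators

set_option synthInstance.maxHeartbeats 1000000
set_option maxHeartbeats 1000000

noncomputable section

/-- Action of a word on a state: `q · u`. -/
def actW {Q A : Type*} (δ : Q → A → Q) (q : Q) (u : List A) : Q :=
  u.foldl δ q

/-- The image `Q · u` of the full state set under a word. -/
def imageSet {Q A : Type*} [Fintype Q] [DecidableEq Q] (δ : Q → A → Q) (u : List A) :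
    Finset Q :=
  Finset.image (fun q => actW δ q u) Finset.univ

/-- The rank `rk(u) = |Q · u|` of a word. -/
def wordRank {Q A : Type*} [Fintype Q] [DecidableEq Q] (δ : Q → A → Q) (u : List A) : ℕ :=
  (imageSet δ u).card

/-- A word is reset (synchronizing) if `|Q · u| = 1`. -/
def IsReset {Q A : Type*} [Fintype Q] [DecidableEq Q] (δ : Q → A → Q) (u : List A) : Prop :=
  wordRank δ u = 1

/-- The automaton is synchronizing if it admits a reset word. -/
def IsSynchronizing {Q A : Type*} [Fintype Q] [DecidableEq Q] (δ : Q → A → Q) : Prop :=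
  ∃ u : List A, IsReset δ u

/-- `Syn(𝒜)`, the set of reset words. -/
def SynWords {Q A : Type*} [Fintype Q] [DecidableEq Q] (δ : Q → A → Q) : Set (List A) :=
  {u | IsReset δ u}

/-- The hyperplane `w⊥ = {v ∈ ℂQ : ∑ q, v q = 0}`. -/
def Wperp (Q : Type*) [Fintype Q] : Submodule ℂ (Q → ℂ) :=
  LinearMap.ker (∑ q : Q, (LinearMap.proj q : (Q → ℂ) →ₗ[ℂ] ℂ))

theorem mem_Wperp {Q : Type*} [Fintype Q] (v : Q → ℂ) :
    v ∈ Wperp Q ↔ ∑ q : Q, v q = 0 := by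
  simp [Wperp, LinearMap.mem_ker, LinearMap.sum_apply]

/-- The (right) action of a word on row vectors `v ↦ v·π(u)`. -/
def piLin {Q A : Type*} [Fintype Q] [DecidableEq Q] (δ : Q → A → Q) (u : List A) :
    (Q → ℂ) →ₗ[ℂ] (Q → ℂ) where
  toFun v := fun p => ∑ q ∈ Finset.univ.filter (fun q => actW δ q u = p), v q
  map_add' := by
    intro a b; funext p; simp [Finset.sum_add_distrib]
  map_smul' := by
    intro c v; funext p; simp [Finset.mul_sum]

theorem piLin_mem {Q A : Type*} [Fintype Q] [DecidableEq Q] (δ : Q → A → Q) (u : List A) :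
    ∀ v ∈ Wperp Q, piLin δ u v ∈ Wperp Q := by
  intro v hv
  rw [mem_Wperp] at hv ⊢
  have h := Finset.sum_fiberwise (Finset.univ : Finset Q) (fun q => actW δ q u) v
  calc ∑ p : Q, piLin δ u v p
      = ∑ p : Q, ∑ q ∈ Finset.univ.filter (fun q => actW δ q u = p), v q := rfl
    _ = ∑ q : Q, v q := h
    _ = 0 := hv

/-- The endomorphism of `w⊥` induced by a word. -/
def rhoEnd {Q A : Type*} [Fintype Q] [DecidableEq Q] (δ : Q → A → Q) (u : List A) :
    Module.End ℂ (Wperp Q) :=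
  (piLin δ u).restrict (piLin_mem δ u)

/-- The representation `ρ : Σ* → End(w⊥)`; we record it in the multiplicative opposite so
that `ρ (u ++ v) = ρ u * ρ v` (the paper's right-action convention). -/
def rho {Q A : Type*} [Fintype Q] [DecidableEq Q] (δ : Q → A → Q) (u : List A) :
    (Module.End ℂ (Wperp Q))ᵐᵒᵖ :=
  MulOpposite.op (rhoEnd δ u)

/-- `ℛ`, the ℂ-subalgebra generated by `ρ(Σ*)`. -/
def Ralg {Q A : Type*} [Fintype Q] [DecidableEq Q] (δ : Q → A → Q) :
    Subalgebra ℂ (Module.End ℂ (Wperp Q))ᵐᵒᵖ :=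
  Algebra.adjoin ℂ (Set.range (rho δ))

/-- `ρ(u)` seen as an element of `ℛ`. -/
def rhoR {Q A : Type*} [Fintype Q] [DecidableEq Q] (δ : Q → A → Q) (u : List A) :
    Ralg δ :=
  ⟨rho δ u, Algebra.subset_adjoin (Set.mem_range_self u)⟩

/-- The Jacobson radical `Rad(ℛ)` of `ℛ`, realised as a subset of the ambient algebra via
the standard characterisation: `x ∈ Rad(ℛ)` iff `x ∈ ℛ` and for every `y ∈ ℛ` the element
`1 - y * x` is left-invertible in `ℛ`. -/
def RadSet {Q A : Type*} [Fintype Q] [DecidableEq Q] (δ : Q → A → Q) :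
    Set (Module.End ℂ (Wperp Q))ᵐᵒᵖ :=
  {x | x ∈ Ralg δ ∧ ∀ y ∈ Ralg δ, ∃ z ∈ Ralg δ, z * (1 - y * x) = 1}

/-- `Rad(𝒜)`: the set of radical words, i.e. words `u` with `ρ(u) ∈ Rad(ℛ)`. -/
def RadWords {Q A : Type*} [Fintype Q] [DecidableEq Q] (δ : Q → A → Q) : Set (List A) :=
  {u | rho δ u ∈ RadSet δ}

/-- The automaton is semisimple when `Rad(𝒜) = Syn(𝒜)`. -/
def IsSemisimple {Q A : Type*} [Fintype Q] [DecidableEq Q] (δ : Q → A → Q) : Prop :=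
  RadWords δ = SynWords δ

/-- The `t`-packing number `D(t,r,n)`: the maximum size of a family of `r`-subsets of an
`n`-set in which every `t`-subset is contained in at most one member. -/
def packingNumber (t r n : ℕ) : ℕ :=
  sSup {m | ∃ F : Finset (Finset (Fin n)), F.card = m ∧ (∀ S ∈ F, S.card = r) ∧
    ∀ T : Finset (Fin n), T.card = t → (F.filter fun S => T ⊆ S).card ≤ 1}

/-- The former-rank `Fr(𝒜)`: the least rank of a non-reset word. -/
def formerRank {Q A : Type*} [Fintype Q] [DecidableEq Q] (δ : Q → A → Q) : ℕ :=
  sInf {m | ∃ u : List A, ¬ IsReset δ u ∧ wordRank δ u = m}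

/-- `Fs(𝒜)`: the set of former-synchronizing words. -/
def Fs {Q A : Type*} [Fintype Q] [DecidableEq Q] (δ : Q → A → Q) : Set (List A) :=
  {u | wordRank δ u = formerRank δ}

/-- `θ_i(u)`: the image of `ρ(u)` in the `i`-th Wedderburn–Artin matrix component, where
`e : ℛ → ∏ i, M_{n_i}(ℂ)` is the quotient map `ψ` followed by the fixed isomorphism. -/
def theta {Q A : Type*} [Fintype Q] [DecidableEq Q] (δ : Q → A → Q) {k : ℕ} {nn : Fin k → ℕ}
    (e : Ralg δ →ₐ[ℂ] ∀ i : Fin k, Matrix (Fin (nn i)) (Fin (nn i)) ℂ)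
    (u : List A) (i : Fin k) : Matrix (Fin (nn i)) (Fin (nn i)) ℂ :=
  e (rhoR δ u) i

/-- `supp(v) = {i : θ_i(v) ≠ 0}`. -/
def suppW {Q A : Type*} [Fintype Q] [DecidableEq Q] (δ : Q → A → Q) {k : ℕ} {nn : Fin k → ℕ}
    (e : Ralg δ →ₐ[ℂ] ∀ i : Fin k, Matrix (Fin (nn i)) (Fin (nn i)) ℂ)
    (v : List A) : Set (Fin k) :=
  {i | theta δ e v i ≠ 0}

/-- `u ∈ Σ* v Σ*`, i.e. `v` is a factor of `u`. -/
def InFactor {A : Type*} (v u : List A) : Prop :=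
  ∃ a b : List A, u = a ++ v ++ b

/-- `u` is a `v`-minimal word: `u ∈ Σ*vΣ*`, `supp(u)` is nonempty, and `supp(u)` is minimal
among the nonempty supports of words in `Σ*vΣ*`. -/
def IsVMinimal {Q A : Type*} [Fintype Q] [DecidableEq Q] (δ : Q → A → Q) {k : ℕ}
    {nn : Fin k → ℕ}
    (e : Ralg δ →ₐ[ℂ] ∀ i : Fin k, Matrix (Fin (nn i)) (Fin (nn i)) ℂ)
    (v u : List A) : Prop :=
  InFactor v u ∧ (suppW δ e u).Nonempty ∧
    ∀ z : List A, InFactor v z → suppW δ e z ⊆ suppW δ e u →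
      suppW δ e z = ∅ ∨ suppW δ e z = suppW δ e u

/-- The `i`-th factor monoid `ℳ_i = θ_i(Σ*)`. -/
def factorMonoid {Q A : Type*} [Fintype Q] [DecidableEq Q] (δ : Q → A → Q) {k : ℕ}
    {nn : Fin k → ℕ}
    (e : Ralg δ →ₐ[ℂ] ∀ i : Fin k, Matrix (Fin (nn i)) (Fin (nn i)) ℂ)
    (i : Fin k) : Set (Matrix (Fin (nn i)) (Fin (nn i)) ℂ) :=
  Set.range fun u : List A => theta δ e u i

/-- A two-sided ideal of the (sub)monoid `M`. -/
def IsSetIdeal {X : Type*} [Mul X] (M I : Set X) : Prop :=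
  I ⊆ M ∧ ∀ a ∈ M, ∀ x ∈ I, a * x ∈ I ∧ x * a ∈ I

/-- `I` is a `0`-minimal (two-sided) ideal of the monoid `M`. -/
def IsZeroMinimalIdeal {X : Type*} [Mul X] [Zero X] (M I : Set X) : Prop :=
  IsSetIdeal M I ∧ (0 : X) ∈ I ∧ I ≠ {0} ∧
    ∀ J : Set X, IsSetIdeal M J → (0 : X) ∈ J → J ⊆ I → J ≠ {0} → J = I

/-- `Rnk_i(g) = min {rk(u) : θ_i(u) = g}`. -/
def rnkElt {Q A : Type*} [Fintype Q] [DecidableEq Q] (δ : Q → A → Q) {k : ℕ}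
    {nn : Fin k → ℕ}
    (e : Ralg δ →ₐ[ℂ] ∀ i : Fin k, Matrix (Fin (nn i)) (Fin (nn i)) ℂ)
    (i : Fin k) (g : Matrix (Fin (nn i)) (Fin (nn i)) ℂ) : ℕ :=
  sInf {m | ∃ u : List A, theta δ e u i = g ∧ wordRank δ u = m}

/-- `Rnk(ℐ_i) = min {Rnk_i(g) : g ∈ ℐ_i ∖ {0}}`. -/
def rnkIdeal {Q A : Type*} [Fintype Q] [DecidableEq Q] (δ : Q → A → Q) {k : ℕ}
    {nn : Fin k → ℕ}
    (e : Ralg δ →ₐ[ℂ] ∀ i : Fin k, Matrix (Fin (nn i)) (Fin (nn i)) ℂ)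
    (i : Fin k) (I : Set (Matrix (Fin (nn i)) (Fin (nn i)) ℂ)) : ℕ :=
  sInf {m | ∃ g ∈ I, g ≠ 0 ∧ rnkElt δ e i g = m}

/-- `w` `u`-represents `g`: `w ∈ Σ*uΣ*`, `θ_i(w) = g`, and either `g = 0` or `rk(w)` is
minimum among all words with the first two properties. -/
def URepresents {Q A : Type*} [Fintype Q] [DecidableEq Q] (δ : Q → A → Q) {k : ℕ}
    {nn : Fin k → ℕ}
    (e : Ralg δ →ₐ[ℂ] ∀ i : Fin k, Matrix (Fin (nn i)) (Fin (nn i)) ℂ)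
    (u : List A) (i : Fin k) (w : List A) (g : Matrix (Fin (nn i)) (Fin (nn i)) ℂ) : Prop :=
  InFactor u w ∧ theta δ e w i = g ∧
    (g = 0 ∨ ∀ w' : List A, InFactor u w' → theta δ e w' i = g → wordRank δ w ≤ wordRank δ w')

/-- The relation `σ_i` on `ℐ_i`. -/
def sigmaRel {Q A : Type*} [Fintype Q] [DecidableEq Q] (δ : Q → A → Q) {k : ℕ}
    {nn : Fin k → ℕ}
    (e : Ralg δ →ₐ[ℂ] ∀ i : Fin k, Matrix (Fin (nn i)) (Fin (nn i)) ℂ)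
    (i : Fin k) (u : List A)
    (g f : Matrix (Fin (nn i)) (Fin (nn i)) ℂ) : Prop :=
  g = f ∨ ∃ w₁ w₂ : List A, URepresents δ e u i w₁ g ∧ URepresents δ e u i w₂ f ∧
    1 < (imageSet δ w₁ ∩ imageSet δ w₂).card

/-- `T ⊆ [1,k]` is a core. -/
def IsCore {Q A : Type*} [Fintype Q] [DecidableEq Q] (δ : Q → A → Q) {k : ℕ}
    {nn : Fin k → ℕ}
    (e : Ralg δ →ₐ[ℂ] ∀ i : Fin k, Matrix (Fin (nn i)) (Fin (nn i)) ℂ)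
    (T : Set (Fin k)) : Prop :=
  ∀ x : List A, (∀ i ∈ T, theta δ e x i = 0) → ∀ i : Fin k, theta δ e x i = 0

/-- A minimal core. -/
def IsMinimalCore {Q A : Type*} [Fintype Q] [DecidableEq Q] (δ : Q → A → Q) {k : ℕ}
    {nn : Fin k → ℕ}
    (e : Ralg δ →ₐ[ℂ] ∀ i : Fin k, Matrix (Fin (nn i)) (Fin (nn i)) ℂ)
    (T : Set (Fin k)) : Prop :=
  IsCore δ e T ∧ ∀ T' : Set (Fin k), T' ⊆ T → IsCore δ e T' → T' = T

/-- An automaton congruence. -/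
def IsCongruence {Q A : Type*} (δ : Q → A → Q) (σ : Q → Q → Prop) : Prop :=
  Equivalence σ ∧ ∀ q p : Q, σ q p → ∀ u : List A, σ (actW δ q u) (actW δ p u)

/-- A simple automaton: the only congruences are the identity and the universal relation. -/
def IsSimple {Q A : Type*} (δ : Q → A → Q) : Prop :=
  ∀ σ : Q → Q → Prop, IsCongruence δ σ → σ = Eq ∨ σ = fun _ _ => True

/-!
If `i` lies in both supports, then since `θ_i(Σ*)` spans the simple algebra `M_{n_i}(ℂ)`, some
word `u₁ y u₂` has `θ_i(u₁ y u₂) ≠ 0`. This word lies in `Σ*v₁Σ* ∩ Σ*v₂Σ*` and its support is a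
nonempty subset of both `supp(u₁)` and `supp(u₂)`, so by minimality it equals both.
-/

theorem IsSimpleRing.eq_zero_or_eq_zero_of_mul_mul_eq_zero {R : Type*} [Ring R] [IsSimpleRing R]
    {a b : R} (h : ∀ c, a * c * b = 0) : a = 0 ∨ b = 0 := by
  refine or_iff_not_imp_right.mpr fun hb => ?_
  let I : TwoSidedIdeal R := .mk' {x | ∀ c, a * c * x = 0} (by simp)
    (fun hx hy c => by rw [mul_add, hx c, hy c, add_zero])
    (fun hx c => by rw [mul_neg, hx c, neg_zero])
    (fun {x y} hy c => by rw [← mul_assoc, mul_assoc a, hy])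
    (fun {x y} hx c => by rw [← mul_assoc, hx c, zero_mul])
  have h1 : (1 : R) ∈ I :=
    IsSimpleRing.one_mem_of_ne_zero_mem I hb ((TwoSidedIdeal.mem_mk' ..).2 h)
  simpa using (TwoSidedIdeal.mem_mk' ..).1 h1 1

theorem Submonoid.forall_mul_mul_eq_zero_of_adjoin_eq_top {K R : Type*} [CommSemiring K]
    [Semiring R] [Algebra K R] {M : Submonoid R} (hM : Algebra.adjoin K (M : Set R) = ⊤)
    {a b : R} (h : ∀ m ∈ M, a * m * b = 0) (x : R) : a * x * b = 0 := by
  have hx : x ∈ Submodule.span K (M : Set R) := by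
    rw [← M.closure_eq, ← Algebra.adjoin_eq_span, hM]
    trivial
  induction hx using Submodule.span_induction with
  | mem m hm => exact h m hm
  | zero => simp
  | add x y _ _ hx hy => rw [mul_add, add_mul, hx, hy, add_zero]
  | smul c x _ hx => rw [mul_smul_comm, smul_mul_assoc, hx, smul_zero]

theorem Algebra.adjoin_image_eq_top {R A B : Type*} [CommSemiring R] [Semiring A] [Semiring B]
    [Algebra R A] [Algebra R B] {f : A →ₐ[R] B} (hf : Function.Surjective f) {s : Set A}
    (hs : Algebra.adjoin R s = ⊤) : Algebra.adjoin R (f '' s) = ⊤ := by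
  rw [Algebra.adjoin_image, hs, Algebra.map_top, (AlgHom.range_eq_top f).2 hf]

section Words

variable {Q A : Type*} (δ : Q → A → Q)

theorem actW_append (q : Q) (x y : List A) :
    actW δ q (x ++ y) = actW δ (actW δ q x) y :=
  List.foldl_append

variable [Fintype Q] [DecidableEq Q]

theorem piLin_append (x y : List A) (v : Q → ℂ) :
    piLin δ (x ++ y) v = piLin δ y (piLin δ x v) := by
  funext p
  simp only [piLin, LinearMap.coe_mk, AddHom.coe_mk, actW_append]
  rw [Finset.sum_filter, Finset.sum_filter,
    ← Finset.sum_fiberwise Finset.univ (fun q => actW δ q x)]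
  refine Finset.sum_congr rfl fun r _ => ?_
  split_ifs with hr
  · exact Finset.sum_congr rfl fun q hq => if_pos ((Finset.mem_filter.mp hq).2 ▸ hr)
  · exact Finset.sum_eq_zero fun q hq => if_neg ((Finset.mem_filter.mp hq).2 ▸ hr)

theorem piLin_nil : piLin δ ([] : List A) = LinearMap.id :=
  LinearMap.ext fun v => funext fun p => by
    simp only [piLin, LinearMap.coe_mk, AddHom.coe_mk, Finset.sum_filter]
    exact (Finset.sum_eq_single p (fun q _ hq => if_neg hq) (by simp)).trans (if_pos rfl)

theorem rhoR_append (x y : List A) : rhoR δ (x ++ y) = rhoR δ x * rhoR δ y := by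
  refine Subtype.ext (MulOpposite.unop_injective (LinearMap.ext fun v => Subtype.ext ?_))
  exact piLin_append δ x y v

theorem rhoR_nil : rhoR δ ([] : List A) = 1 := by
  refine Subtype.ext (MulOpposite.unop_injective (LinearMap.ext fun v => Subtype.ext ?_))
  exact LinearMap.congr_fun (piLin_nil δ) v.1

theorem adjoin_range_rhoR : Algebra.adjoin ℂ (Set.range (rhoR δ)) = ⊤ := by
  have h : Set.range (rhoR δ) = ((↑) : Ralg δ → _) ⁻¹' Set.range (rho δ) := by
    ext x
    exact ⟨fun ⟨u, hu⟩ => ⟨u, congrArg Subtype.val hu⟩, fun ⟨u, hu⟩ => ⟨u, Subtype.ext hu⟩⟩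
  rw [h]
  exact Algebra.adjoin_adjoin_coe_preimage

variable {k : ℕ} {nn : Fin k → ℕ}
  (e : Ralg δ →ₐ[ℂ] ∀ i : Fin k, Matrix (Fin (nn i)) (Fin (nn i)) ℂ)

theorem theta_append (x y : List A) (i : Fin k) :
    theta δ e (x ++ y) i = theta δ e x i * theta δ e y i := by
  rw [theta, rhoR_append, map_mul]
  rfl

theorem theta_nil (i : Fin k) : theta δ e ([] : List A) i = 1 := by
  rw [theta, rhoR_nil, map_one]
  rfl

def factorSubmonoid (i : Fin k) : Submonoid (Matrix (Fin (nn i)) (Fin (nn i)) ℂ) where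
  carrier := factorMonoid δ e i
  mul_mem' := by
    rintro _ _ ⟨x, rfl⟩ ⟨y, rfl⟩
    exact ⟨x ++ y, theta_append δ e x y i⟩
  one_mem' := ⟨[], theta_nil δ e i⟩

theorem adjoin_factorSubmonoid (he_surj : Function.Surjective e) (i : Fin k) :
    Algebra.adjoin ℂ (factorSubmonoid δ e i : Set (Matrix (Fin (nn i)) (Fin (nn i)) ℂ)) = ⊤ := by
  have hsurj : Function.Surjective ((Pi.evalAlgHom ℂ _ i).comp e) :=
    (Function.surjective_eval i).comp he_surj
  convert Algebra.adjoin_image_eq_top hsurj (adjoin_range_rhoR δ)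
  rw [← Set.range_comp]
  rfl

theorem exists_theta_append_append_ne_zero (he_surj : Function.Surjective e) {i : Fin k}
    {u₁ u₂ : List A} (h₁ : theta δ e u₁ i ≠ 0) (h₂ : theta δ e u₂ i ≠ 0) :
    ∃ y : List A, theta δ e (u₁ ++ y ++ u₂) i ≠ 0 := by
  obtain ⟨p, -⟩ := Function.ne_iff.mp h₁
  have : Nonempty (Fin (nn i)) := ⟨p⟩
  by_contra! h
  have hM : ∀ m ∈ factorSubmonoid δ e i, theta δ e u₁ i * m * theta δ e u₂ i = 0 := by
    rintro _ ⟨y, rfl⟩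
    rw [← theta_append, ← theta_append]
    exact h y
  have hall := Submonoid.forall_mul_mul_eq_zero_of_adjoin_eq_top
    (adjoin_factorSubmonoid δ e he_surj i) hM
  exact (IsSimpleRing.eq_zero_or_eq_zero_of_mul_mul_eq_zero hall).elim h₁ h₂

theorem suppW_append_subset_left (x y : List A) : suppW δ e (x ++ y) ⊆ suppW δ e x :=
  fun i hi hx => hi (by rw [theta_append, hx, zero_mul])

theorem suppW_append_subset_right (x y : List A) : suppW δ e (x ++ y) ⊆ suppW δ e y :=
  fun i hi hy => hi (by rw [theta_append, hy, mul_zero])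

theorem IsVMinimal.suppW_eq {v u z : List A} (hu : IsVMinimal δ e v u) (hz : InFactor v z)
    (hsub : suppW δ e z ⊆ suppW δ e u) (hne : (suppW δ e z).Nonempty) :
    suppW δ e z = suppW δ e u :=
  (hu.2.2 z hz hsub).resolve_left hne.ne_empty

end Words

theorem InFactor.append_left {A : Type*} {v u : List A} (h : InFactor v u) (w : List A) :
    InFactor v (w ++ u) := by
  obtain ⟨a, b, rfl⟩ := h
  exact ⟨w ++ a, b, by simp⟩

theorem InFactor.append_right {A : Type*} {v u : List A} (h : InFactor v u) (w : List A) :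
    InFactor v (u ++ w) := by
  obtain ⟨a, b, rfl⟩ := h
  exact ⟨a, b ++ w, by simp⟩

theorem stmt8_general {Q A : Type*} [Fintype Q] [DecidableEq Q] (δ : Q → A → Q)
    {k : ℕ} {nn : Fin k → ℕ}
    (e : Ralg δ →ₐ[ℂ] ∀ i : Fin k, Matrix (Fin (nn i)) (Fin (nn i)) ℂ)
    (he_surj : Function.Surjective e)
    (v₁ v₂ u₁ u₂ : List A) (hu₁ : IsVMinimal δ e v₁ u₁) (hu₂ : IsVMinimal δ e v₂ u₂)
    (hne : suppW δ e u₁ ≠ suppW δ e u₂) :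
    suppW δ e u₁ ∩ suppW δ e u₂ = ∅ := by
  refine Set.eq_empty_of_forall_notMem fun i ⟨hi₁, hi₂⟩ => hne ?_
  obtain ⟨y, hy⟩ := exists_theta_append_append_ne_zero δ e he_surj hi₁ hi₂
  have hz : (suppW δ e (u₁ ++ y ++ u₂)).Nonempty := ⟨i, hy⟩
  have hz₁ : suppW δ e (u₁ ++ y ++ u₂) = suppW δ e u₁ :=
    hu₁.suppW_eq δ e ((hu₁.1.append_right y).append_right u₂)
      ((suppW_append_subset_left δ e _ _).trans (suppW_append_subset_left δ e _ _)) hz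
  have hz₂ : suppW δ e (u₁ ++ y ++ u₂) = suppW δ e u₂ :=
    hu₂.suppW_eq δ e (hu₂.1.append_left _) (suppW_append_subset_right δ e _ _) hz
  rw [← hz₁, ← hz₂]

theorem stmt8 {Q A : Type*} [Fintype Q] [DecidableEq Q] (δ : Q → A → Q)
    {k : ℕ} {nn : Fin k → ℕ}
    (e : Ralg δ →ₐ[ℂ] ∀ i : Fin k, Matrix (Fin (nn i)) (Fin (nn i)) ℂ)
    (he_surj : Function.Surjective e)
    (he_ker : ∀ x : Ralg δ, e x = 0 ↔ (x : (Module.End ℂ (Wperp Q))ᵐᵒᵖ) ∈ RadSet δ)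
    (hsync : IsSynchronizing δ)
    (v₁ v₂ u₁ u₂ : List A) (hu₁ : IsVMinimal δ e v₁ u₁) (hu₂ : IsVMinimal δ e v₂ u₂)
    (hne : suppW δ e u₁ ≠ suppW δ e u₂) :
    suppW δ e u₁ ∩ suppW δ e u₂ = ∅ :=
  stmt8_general δ e he_surj v₁ v₂ u₁ u₂ hu₁ hu₂ hne

end
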